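/- arXiv:1902.04366 — 4 statements merged into one kernel-verified Lean document; each statement's English description precedes it below -/
import Mathlib

section
/- For every ν > 0, every L > 0 and every nonzero k ∈ ℤ³ with |k| ≤ L, one has |M̂₁^ν(k) − M̂₁^0(k)| ≤ (4νL¹⁰ + 2ν²L¹²)·|k|. -/
/-- The Euclidean norm of `k ∈ ℤ³`. -/
noncomputable def knorm3 (k : ℤ × ℤ × ℤ) : ℝ :=
  Real.sqrt (((k.1 : ℝ)) ^ 2 + ((k.2.1 : ℝ)) ^ 2 + ((k.2.2 : ℝ)) ^ 2)

/-- The denominator `D_ν(k) = |k|²k₃² + (k₂² + ν|k|⁴)²` of the MG symbols. -/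
noncomputable def Dmg (ν : ℝ) (k : ℤ × ℤ × ℤ) : ℝ :=
  knorm3 k ^ 2 * ((k.2.2 : ℝ)) ^ 2 + (((k.2.1 : ℝ)) ^ 2 + ν * knorm3 k ^ 4) ^ 2

/-- The first MG Fourier multiplier symbol
`M̂₁^ν(k) = (k₂k₃|k|² − k₁k₃(k₂² + ν|k|⁴)) / D_ν(k)`
(in Lean, division by zero yields `0`, which matches the convention that the
symbol vanishes whenever `D_ν(k) = 0`). -/
noncomputable def M1mg (ν : ℝ) (k : ℤ × ℤ × ℤ) : ℝ :=
  ((k.2.1 : ℝ) * (k.2.2 : ℝ) * knorm3 k ^ 2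
    - (k.1 : ℝ) * (k.2.2 : ℝ) * (((k.2.1 : ℝ)) ^ 2 + ν * knorm3 k ^ 4)) / Dmg ν k

/-- The second MG Fourier multiplier symbol
`M̂₂^ν(k) = (−k₁k₃|k|² − k₂k₃(k₂² + ν|k|⁴)) / D_ν(k)`. -/
noncomputable def M2mg (ν : ℝ) (k : ℤ × ℤ × ℤ) : ℝ :=
  (-(k.1 : ℝ) * (k.2.2 : ℝ) * knorm3 k ^ 2
    - (k.2.1 : ℝ) * (k.2.2 : ℝ) * (((k.2.1 : ℝ)) ^ 2 + ν * knorm3 k ^ 4)) / Dmg ν k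


set_option maxHeartbeats 1000000

private lemma int_one_le_sq {m : ℤ} (h : m ≠ 0) : (1 : ℤ) ≤ m ^ 2 := by
  have h1 : 1 ≤ |m| := Int.one_le_abs h
  have h2 : |m| ^ 2 = m ^ 2 := sq_abs m
  nlinarith [abs_nonneg m]

/-- For every `ν > 0`, every `L > 0` and every nonzero `k ∈ ℤ³` with `|k| ≤ L`,
one has `|M̂₁^ν(k) − M̂₁^0(k)| ≤ (4νL¹⁰ + 2ν²L¹²)·|k|`. -/
theorem mg_symbol_diff_bound (ν L : ℝ) (hν : 0 < ν) (hL : 0 < L)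
    (k : ℤ × ℤ × ℤ) (hk : k ≠ 0) (hkL : knorm3 k ≤ L) :
    |M1mg ν k - M1mg 0 k| ≤ (4 * ν * L ^ 10 + 2 * ν ^ 2 * L ^ 12) * knorm3 k := by
  set a : ℝ := (k.1 : ℝ) with ha
  set b : ℝ := (k.2.1 : ℝ) with hb
  set c : ℝ := (k.2.2 : ℝ) with hc
  set r : ℝ := knorm3 k with hrdef
  have hr0 : 0 ≤ r := Real.sqrt_nonneg _
  have hs : r ^ 2 = a ^ 2 + b ^ 2 + c ^ 2 := Real.sq_sqrt (by positivity)
  clear_value a b c r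
  -- 1 ≤ r²
  have hkne : k.1 ≠ 0 ∨ k.2.1 ≠ 0 ∨ k.2.2 ≠ 0 := by
    by_contra h
    push_neg at h
    exact hk (Prod.ext h.1 (Prod.ext h.2.1 h.2.2))
  have hint : (1 : ℤ) ≤ k.1 ^ 2 + k.2.1 ^ 2 + k.2.2 ^ 2 := by
    rcases hkne with h | h | h <;>
      linarith [int_one_le_sq h, sq_nonneg k.1, sq_nonneg k.2.1, sq_nonneg k.2.2]
  have hs1 : (1 : ℝ) ≤ r ^ 2 := by
    rw [hs, ha, hb, hc]
    exact_mod_cast hint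
  have hr1 : (1 : ℝ) ≤ r := by nlinarith
  have hL1 : (1 : ℝ) ≤ L := le_trans hr1 hkL
  have ha2 : a ^ 2 ≤ r ^ 2 := by nlinarith [sq_nonneg b, sq_nonneg c]
  have hb2 : b ^ 2 ≤ r ^ 2 := by nlinarith [sq_nonneg a, sq_nonneg c]
  have hc2 : c ^ 2 ≤ r ^ 2 := by nlinarith [sq_nonneg a, sq_nonneg b]
  by_cases hbc : k.2.1 = 0 ∧ k.2.2 = 0
  · have hb0 : b = 0 := by rw [hb, hbc.1]; norm_num
    have hc0 : c = 0 := by rw [hc, hbc.2]; norm_num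
    have h1 : M1mg ν k = 0 := by
      rw [M1mg, ← ha, ← hb, ← hc, ← hrdef, hb0, hc0]
      simp
    have h2 : M1mg 0 k = 0 := by
      rw [M1mg, ← ha, ← hb, ← hc, ← hrdef, hb0, hc0]
      simp
    rw [h1, h2, sub_zero, abs_zero]
    have : (0:ℝ) ≤ 4 * ν * L ^ 10 + 2 * ν ^ 2 * L ^ 12 := by positivity
    exact mul_nonneg this hr0
  · -- nondegenerate case
    have hbc' : b ^ 2 + c ^ 2 ≥ 1 := by
      have : k.2.1 ≠ 0 ∨ k.2.2 ≠ 0 := by tauto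
      have hint2 : (1 : ℤ) ≤ k.2.1 ^ 2 + k.2.2 ^ 2 := by
        rcases this with h | h <;>
          linarith [int_one_le_sq h, sq_nonneg k.2.1, sq_nonneg k.2.2]
      rw [hb, hc]
      exact_mod_cast hint2
    have hD0eq : Dmg 0 k = r ^ 2 * c ^ 2 + b ^ 4 := by
      rw [Dmg, ← hb, ← hc, ← hrdef]; ring
    have hD0 : (1 : ℝ) ≤ Dmg 0 k := by
      rw [hD0eq]
      rcases (by tauto : k.2.1 ≠ 0 ∨ k.2.2 ≠ 0) with h | h
      · have hb1 : (1:ℝ) ≤ b ^ 2 := by rw [hb]; exact_mod_cast int_one_le_sq h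
        nlinarith [sq_nonneg c, sq_nonneg r]
      · have hc1 : (1:ℝ) ≤ c ^ 2 := by rw [hc]; exact_mod_cast int_one_le_sq h
        nlinarith [sq_nonneg b, sq_nonneg (b^2)]
    have hDνeq : Dmg ν k = Dmg 0 k + ν * r ^ 4 * (2 * b ^ 2 + ν * r ^ 4) := by
      rw [Dmg, Dmg, ← hb, ← hc, ← hrdef]; ring
    have hDν : (1 : ℝ) ≤ Dmg ν k := by
      rw [hDνeq]
      nlinarith [sq_nonneg b, pow_pos (lt_of_lt_of_le one_pos hr1) 4, sq_nonneg (r^2),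
        mul_pos hν (pow_pos (lt_of_lt_of_le one_pos hr1) 4)]
    have hD0pos : (0:ℝ) < Dmg 0 k := lt_of_lt_of_le one_pos hD0
    have hDνpos : (0:ℝ) < Dmg ν k := lt_of_lt_of_le one_pos hDν
    set Nν : ℝ := b * c * r ^ 2 - a * c * (b ^ 2 + ν * r ^ 4) with hNν
    set N0 : ℝ := b * c * r ^ 2 - a * c * (b ^ 2 + 0 * r ^ 4) with hN0
    have hM1ν : M1mg ν k = Nν / Dmg ν k := by rw [M1mg, ← ha, ← hb, ← hc, ← hrdef]
    have hM10 : M1mg 0 k = N0 / Dmg 0 k := by rw [M1mg, ← ha, ← hb, ← hc, ← hrdef]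
    rw [hM1ν, hM10, div_sub_div _ _ (ne_of_gt hDνpos) (ne_of_gt hD0pos)]
    rw [abs_div, abs_of_pos (mul_pos hDνpos hD0pos)]
    have hden : (1:ℝ) ≤ Dmg ν k * Dmg 0 k := one_le_mul_of_one_le_of_one_le hDν hD0
    have step1 : |Nν * Dmg 0 k - Dmg ν k * N0| / (Dmg ν k * Dmg 0 k)
        ≤ |Nν * Dmg 0 k - Dmg ν k * N0| := by
      apply div_le_self (abs_nonneg _) hden
    refine le_trans step1 ?_
    -- factor the numerator
    have hfac : Nν * Dmg 0 k - Dmg ν k * N0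
        = -(ν * r ^ 4) * (a * c * Dmg 0 k + N0 * (2 * b ^ 2 + ν * r ^ 4)) := by
      rw [hDνeq, hNν, hN0]; ring
    rw [hfac, abs_mul, abs_neg, abs_of_nonneg (by positivity : (0:ℝ) ≤ ν * r ^ 4)]
    -- bounds on pieces
    have hac : |a * c| ≤ r ^ 2 / 2 := by
      rw [abs_mul]
      nlinarith [sq_nonneg (|a| - |c|), sq_abs a, sq_abs c, abs_nonneg a, abs_nonneg c,
        sq_nonneg b]
    have hbcabs : |b * c| ≤ r ^ 2 / 2 := by
      rw [abs_mul]
      nlinarith [sq_nonneg (|b| - |c|), sq_abs b, sq_abs c, abs_nonneg b, abs_nonneg c,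
        sq_nonneg a]
    have hD0le : Dmg 0 k ≤ 2 * r ^ 4 := by
      rw [hD0eq]
      nlinarith [sq_nonneg b, sq_nonneg c, sq_nonneg r]
    have hN0abs : |N0| ≤ r ^ 4 := by
      have e : N0 = b * c * r ^ 2 - a * c * b ^ 2 := by rw [hN0]; ring
      calc |N0| = |b * c * r ^ 2 - a * c * b ^ 2| := by rw [e]
        _ ≤ |b * c * r ^ 2| + |a * c * b ^ 2| := abs_sub _ _
        _ = |b * c| * r ^ 2 + |a * c| * b ^ 2 := by
            rw [abs_mul (b * c) (r ^ 2), abs_mul (a * c) (b ^ 2),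
              abs_of_nonneg (by positivity : (0:ℝ) ≤ r ^ 2),
              abs_of_nonneg (by positivity : (0:ℝ) ≤ b ^ 2)]
        _ ≤ r ^ 4 := by
            nlinarith [mul_le_mul_of_nonneg_right hbcabs (by positivity : (0:ℝ) ≤ r ^ 2),
              mul_le_mul_of_nonneg_right hac (by positivity : (0:ℝ) ≤ b ^ 2),
              mul_le_mul_of_nonneg_left hb2 (by positivity : (0:ℝ) ≤ r ^ 2 / 2)]
    have hinner : |a * c * Dmg 0 k + N0 * (2 * b ^ 2 + ν * r ^ 4)| ≤ 3 * r ^ 6 + ν * r ^ 8 := by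
      have h1 : |a * c * Dmg 0 k + N0 * (2 * b ^ 2 + ν * r ^ 4)|
          ≤ |a * c| * Dmg 0 k + |N0| * (2 * b ^ 2 + ν * r ^ 4) := by
        calc |a * c * Dmg 0 k + N0 * (2 * b ^ 2 + ν * r ^ 4)|
            ≤ |a * c * Dmg 0 k| + |N0 * (2 * b ^ 2 + ν * r ^ 4)| := abs_add_le _ _
          _ = |a * c| * Dmg 0 k + |N0| * (2 * b ^ 2 + ν * r ^ 4) := by
              rw [abs_mul (a * c) (Dmg 0 k), abs_mul N0 (2 * b ^ 2 + ν * r ^ 4),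
                abs_of_pos hD0pos,
                abs_of_nonneg (by positivity : (0:ℝ) ≤ 2 * b ^ 2 + ν * r ^ 4)]
      refine le_trans h1 ?_
      have h2 : |a * c| * Dmg 0 k ≤ r ^ 2 / 2 * (2 * r ^ 4) :=
        mul_le_mul hac hD0le hD0pos.le (by positivity)
      have h3 : |N0| * (2 * b ^ 2 + ν * r ^ 4) ≤ r ^ 4 * (2 * r ^ 2 + ν * r ^ 4) := by
        apply mul_le_mul hN0abs _ (by positivity) (by positivity)
        nlinarith [sq_nonneg r]
      nlinarith [h2, h3]
    have final : ν * r ^ 4 * |a * c * Dmg 0 k + N0 * (2 * b ^ 2 + ν * r ^ 4)|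
        ≤ ν * r ^ 4 * (3 * r ^ 6 + ν * r ^ 8) :=
      mul_le_mul_of_nonneg_left hinner (mul_nonneg hν.le (pow_nonneg hr0 4))
    refine le_trans final ?_
    have h9 : r ^ 9 ≤ L ^ 9 := pow_le_pow_left₀ hr0 hkL 9
    have h11 : r ^ 11 ≤ L ^ 11 := pow_le_pow_left₀ hr0 hkL 11
    have h910 : L ^ 9 ≤ L ^ 10 := pow_le_pow_right₀ hL1 (by norm_num)
    have h1112 : L ^ 11 ≤ L ^ 12 := pow_le_pow_right₀ hL1 (by norm_num)
    have A : r ^ 9 * r ≤ L ^ 10 * r :=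
      mul_le_mul_of_nonneg_right (h9.trans h910) hr0
    have B : r ^ 11 * r ≤ L ^ 12 * r :=
      mul_le_mul_of_nonneg_right (h11.trans h1112) hr0
    have E : ν * (r ^ 9 * r) ≤ ν * (L ^ 10 * r) := mul_le_mul_of_nonneg_left A hν.le
    have F : ν ^ 2 * (r ^ 11 * r) ≤ ν ^ 2 * (L ^ 12 * r) :=
      mul_le_mul_of_nonneg_left B (sq_nonneg ν)
    have G : (0:ℝ) ≤ ν * (L ^ 10 * r) :=
      mul_nonneg hν.le (mul_nonneg (pow_nonneg hL.le 10) hr0)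
    have H : (0:ℝ) ≤ ν ^ 2 * (L ^ 12 * r) :=
      mul_nonneg (sq_nonneg ν) (mul_nonneg (pow_nonneg hL.le 12) hr0)
    clear_value Nν N0
    linarith [E, F, G, H]
end

section
/- For every ν ∈ [0,1] and every nonzero k ∈ ℤ³, one has |M̂₁^ν(k)| ≤ 3|k| and |M̂₂^ν(k)| ≤ 3|k|; in particular the first two MG symbols are uniformly of order at most one, uniformly in ν ∈ [0,1]. -/
/-- Generic numerator bound for the MG symbols. -/
lemma mg_aux (r z B a b : ℝ) (hr1 : 1 ≤ r) (ha : |a| ≤ r) (hb : |b| ≤ r)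
    (hz1 : 1 ≤ |z|) (hB : 0 ≤ B) :
    |a * z * r ^ 2 - b * z * B| ≤ 3 * r * (r ^ 2 * z ^ 2 + B ^ 2) := by
  have hr0 : (0:ℝ) ≤ r := le_trans zero_le_one hr1
  have hzz : |z| ≤ z ^ 2 := by nlinarith [sq_abs z]
  have h1 : |a * z * r ^ 2| ≤ r * (r ^ 2 * z ^ 2) := by
    rw [abs_mul, abs_mul, abs_of_nonneg (sq_nonneg r)]
    calc |a| * |z| * r ^ 2 ≤ r * z ^ 2 * r ^ 2 :=
          mul_le_mul_of_nonneg_right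
            (mul_le_mul ha hzz (abs_nonneg z) hr0) (sq_nonneg r)
      _ = r * (r ^ 2 * z ^ 2) := by ring
  have h2 : |b * z * B| ≤ r * (r ^ 2 * z ^ 2 + B ^ 2) := by
    rw [abs_mul, abs_mul, abs_of_nonneg hB]
    have h2a : |b| * |z| * B ≤ r * |z| * B :=
      mul_le_mul_of_nonneg_right
        (mul_le_mul_of_nonneg_right hb (abs_nonneg z)) hB
    have h2b : r * |z| * B ≤ r * (r ^ 2 * z ^ 2 + B ^ 2) := by
      nlinarith [sq_nonneg (r * |z| - B), sq_abs z,
        mul_nonneg (by linarith : (0:ℝ) ≤ r - 1)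
          (by positivity : (0:ℝ) ≤ r ^ 2 * z ^ 2 + B ^ 2)]
    linarith
  have tri : |a * z * r ^ 2 - b * z * B| ≤ |a * z * r ^ 2| + |b * z * B| := by
    rw [sub_eq_add_neg]
    exact (abs_add_le _ _).trans (le_of_eq (by rw [abs_neg]))
  have hfin : r * (r ^ 2 * z ^ 2) + r * (r ^ 2 * z ^ 2 + B ^ 2)
      ≤ 3 * r * (r ^ 2 * z ^ 2 + B ^ 2) := by
    nlinarith [mul_nonneg (mul_nonneg hr0 (sq_nonneg r)) (sq_nonneg z),
      mul_nonneg hr0 (sq_nonneg B)]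
  linarith [tri, h1, h2]

/-- For every `ν ∈ [0,1]` and every nonzero `k ∈ ℤ³`, one has
`|M̂₁^ν(k)| ≤ 3|k|` and `|M̂₂^ν(k)| ≤ 3|k|`: the first two MG symbols are of
order at most one, uniformly in `ν ∈ [0,1]`. -/
theorem mg_symbol_order_one_bound (ν : ℝ) (hν : ν ∈ Set.Icc (0 : ℝ) 1)
    (k : ℤ × ℤ × ℤ) (hk : k ≠ 0) :
    |M1mg ν k| ≤ 3 * knorm3 k ∧ |M2mg ν k| ≤ 3 * knorm3 k := by
  obtain ⟨hν0, hν1⟩ := hν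
  set x : ℝ := (k.1 : ℝ) with hxdef
  set y : ℝ := (k.2.1 : ℝ) with hydef
  set z : ℝ := (k.2.2 : ℝ) with hzdef
  set r : ℝ := knorm3 k with hrdef
  have hr0 : 0 ≤ r := Real.sqrt_nonneg _
  have hr2 : r ^ 2 = x ^ 2 + y ^ 2 + z ^ 2 := Real.sq_sqrt (by positivity)
  by_cases hz : k.2.2 = 0
  · have hz' : z = 0 := by rw [hzdef, hz]; norm_num
    constructor
    · simp only [M1mg, ← hxdef, ← hydef, ← hzdef, ← hrdef, hz']
      simp [abs_nonneg]
      positivity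
    · simp only [M2mg, ← hxdef, ← hydef, ← hzdef, ← hrdef, hz']
      simp [abs_nonneg]
      positivity
  · -- k₃ ≠ 0
    have hz1 : (1:ℝ) ≤ |z| := by
      have : (1:ℤ) ≤ |k.2.2| := Int.one_le_abs hz
      calc (1:ℝ) = ((1:ℤ):ℝ) := by norm_num
        _ ≤ ((|k.2.2| : ℤ) : ℝ) := by exact_mod_cast this
        _ = |z| := by rw [hzdef]; push_cast; ring
    have hz2 : (1:ℝ) ≤ z ^ 2 := by nlinarith [sq_abs z]
    have hr1 : 1 ≤ r := by nlinarith [sq_nonneg x, sq_nonneg y]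
    have hx : |x| ≤ r := by
      rw [abs_le]; constructor <;> nlinarith [sq_nonneg y, sq_nonneg z]
    have hy : |y| ≤ r := by
      rw [abs_le]; constructor <;> nlinarith [sq_nonneg x, sq_nonneg z]
    have hB : 0 ≤ y ^ 2 + ν * r ^ 4 := by positivity
    have hDeq : Dmg ν k = r ^ 2 * z ^ 2 + (y ^ 2 + ν * r ^ 4) ^ 2 := rfl
    have hD : 0 < Dmg ν k := by
      rw [hDeq]; nlinarith [sq_nonneg (y ^ 2 + ν * r ^ 4)]
    constructor
    · have hnum : |y * z * r ^ 2 - x * z * (y ^ 2 + ν * r ^ 4)|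
          ≤ 3 * r * (r ^ 2 * z ^ 2 + (y ^ 2 + ν * r ^ 4) ^ 2) :=
        mg_aux r z (y ^ 2 + ν * r ^ 4) y x hr1 hy hx hz1 hB
      rw [M1mg, abs_div, abs_of_pos hD, div_le_iff₀ hD]
      calc |y * z * r ^ 2 - x * z * (y ^ 2 + ν * r ^ 4)|
          ≤ 3 * r * (r ^ 2 * z ^ 2 + (y ^ 2 + ν * r ^ 4) ^ 2) := hnum
        _ = 3 * r * Dmg ν k := by rw [hDeq]
    · have hnum : |(-x) * z * r ^ 2 - y * z * (y ^ 2 + ν * r ^ 4)|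
          ≤ 3 * r * (r ^ 2 * z ^ 2 + (y ^ 2 + ν * r ^ 4) ^ 2) :=
        mg_aux r z (y ^ 2 + ν * r ^ 4) (-x) y hr1 (by rwa [abs_neg]) hy hz1 hB
      rw [M2mg, abs_div, abs_of_pos hD, div_le_iff₀ hD]
      calc |(-x) * z * r ^ 2 - y * z * (y ^ 2 + ν * r ^ 4)|
          ≤ 3 * r * (r ^ 2 * z ^ 2 + (y ^ 2 + ν * r ^ 4) ^ 2) := hnum
        _ = 3 * r * Dmg ν k := by rw [hDeq]
end

section
/- For every ν > 0 there exists a constant C > 0 depending only on ν (one may take C = 2/ν² + 1/ν) such that |M̂ⱼ^ν(k)| ≤ C|k|⁻² for all j ∈ {1,2,3} and all nonzero k ∈ ℤ³; that is, for fixed positive viscosity the MG constitutive operator is smoothing of order two. -/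
/-- The third MG Fourier multiplier symbol
`M̂₃^ν(k) = (k₁² + k₂²)(k₂² + ν|k|⁴) / D_ν(k)`. -/
noncomputable def M3mg (ν : ℝ) (k : ℤ × ℤ × ℤ) : ℝ :=
  (((k.1 : ℝ)) ^ 2 + ((k.2.1 : ℝ)) ^ 2) * (((k.2.1 : ℝ)) ^ 2 + ν * knorm3 k ^ 4) / Dmg ν k

lemma mg_div_bound (C r D n : ℝ) (hr : 0 < r) (hD : 0 < D) (h : |n| * r ≤ C * D) :
    |n / D| ≤ C * r⁻¹ := by
  rw [abs_div, abs_of_pos hD, div_le_iff₀ hD]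
  have he : C * r⁻¹ * D = C * D / r := by field_simp
  rw [he, le_div_iff₀ hr]
  linarith

lemma mg_abs_mul_le (x y r : ℝ) (h : x ^ 2 + y ^ 2 ≤ r) : |x * y| ≤ r := by
  have h0 : (0:ℝ) ≤ r := le_trans (by positivity) h
  rw [abs_mul]
  nlinarith [sq_abs x, sq_abs y, sq_nonneg (|x| - |y|), abs_nonneg x, abs_nonneg y]

lemma int_sq_one_le (m : ℤ) (hm : m ≠ 0) : (1 : ℝ) ≤ (m : ℝ) ^ 2 := by
  have h1 : (1 : ℤ) ≤ |m| := Int.one_le_abs hm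
  have : (1 : ℤ) ≤ m ^ 2 := by nlinarith [sq_abs m]
  exact_mod_cast this

set_option maxHeartbeats 1600000 in
/-- For every `ν > 0` there is a constant `C > 0` depending only on `ν`
(one may take `C = 2/ν² + 1/ν`) such that `|M̂ⱼ^ν(k)| ≤ C|k|⁻²` for
`j ∈ {1,2,3}` and all nonzero `k ∈ ℤ³`: for fixed positive viscosity the MG
constitutive operator is smoothing of order two. -/
theorem mg_symbol_smoothing_order_two (ν : ℝ) (hν : 0 < ν) :
    ∃ C : ℝ, C = 2 / ν ^ 2 + 1 / ν ∧ 0 < C ∧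
      ∀ k : ℤ × ℤ × ℤ, k ≠ 0 →
        |M1mg ν k| ≤ C * (knorm3 k ^ 2)⁻¹ ∧
        |M2mg ν k| ≤ C * (knorm3 k ^ 2)⁻¹ ∧
        |M3mg ν k| ≤ C * (knorm3 k ^ 2)⁻¹ := by
  have hC2 : (0:ℝ) < 2 / ν ^ 2 + 1 / ν := by positivity
  refine ⟨2 / ν ^ 2 + 1 / ν, rfl, hC2, fun k hk => ?_⟩
  set C : ℝ := 2 / ν ^ 2 + 1 / ν with hC
  set a : ℝ := ((k.1 : ℤ) : ℝ) with ha
  set b : ℝ := ((k.2.1 : ℤ) : ℝ) with hb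
  set c : ℝ := ((k.2.2 : ℤ) : ℝ) with hc
  set r : ℝ := a ^ 2 + b ^ 2 + c ^ 2 with hrdef
  have hr2 : knorm3 k ^ 2 = r := Real.sq_sqrt (by positivity)
  have hr4 : knorm3 k ^ 4 = r ^ 2 := by
    rw [show (4:ℕ) = 2 * 2 from rfl, pow_mul, hr2]
  -- 1 ≤ r
  have hne : k.1 ≠ 0 ∨ k.2.1 ≠ 0 ∨ k.2.2 ≠ 0 := by
    by_contra h
    push_neg at h
    exact hk (Prod.ext h.1 (Prod.ext h.2.1 h.2.2))
  have hr1 : (1:ℝ) ≤ r := by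
    rcases hne with h | h | h
    · have := int_sq_one_le _ h; nlinarith [sq_nonneg b, sq_nonneg c]
    · have := int_sq_one_le _ h; nlinarith [sq_nonneg a, sq_nonneg c]
    · have := int_sq_one_le _ h; nlinarith [sq_nonneg a, sq_nonneg b]
  have hrpos : (0:ℝ) < r := by linarith
  set Y : ℝ := b ^ 2 + ν * r ^ 2 with hY
  have hYlb : ν * r ^ 2 ≤ Y := by nlinarith [sq_nonneg b]
  have hYpos : (0:ℝ) < Y := lt_of_lt_of_le (mul_pos hν (pow_pos hrpos 2)) hYlb
  have hDval : Dmg ν k = r * c ^ 2 + Y ^ 2 := by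
    rw [Dmg, hr2, hr4]
  set D : ℝ := r * c ^ 2 + Y ^ 2 with hD
  have hDpos : (0:ℝ) < D := by nlinarith [mul_nonneg hrpos.le (sq_nonneg c)]
  have hDgeY2 : Y ^ 2 ≤ D := by nlinarith [mul_nonneg hrpos.le (sq_nonneg c)]
  -- basic abs bounds
  have hac : |a * c| ≤ r := mg_abs_mul_le a c r (by nlinarith [sq_nonneg b])
  have hbc : |b * c| ≤ r := mg_abs_mul_le b c r (by nlinarith [sq_nonneg a])
  -- key term bounds
  have T1 : ∀ x : ℝ, |x| ≤ r → |x| * r * r ≤ 1 / ν ^ 2 * D := by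
    intro x hx
    have e1 : |x| * r * r ≤ r * r * r :=
      mul_le_mul_of_nonneg_right (mul_le_mul_of_nonneg_right hx hrpos.le) hrpos.le
    have e2 : r * r * r ≤ r ^ 4 := by
      nlinarith [mul_nonneg (mul_nonneg (mul_nonneg hrpos.le hrpos.le) hrpos.le)
        (sub_nonneg.mpr hr1)]
    have h1 : ν ^ 2 * (|x| * r * r) ≤ ν ^ 2 * r ^ 4 :=
      mul_le_mul_of_nonneg_left (e1.trans e2) (sq_nonneg ν)
    have h2 : ν ^ 2 * r ^ 4 ≤ Y ^ 2 := by
      nlinarith [mul_le_mul hYlb hYlb (mul_pos hν (pow_pos hrpos 2)).le hYpos.le]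
    rw [div_mul_eq_mul_div, le_div_iff₀ (by positivity : (0:ℝ) < ν ^ 2)]
    nlinarith [h1, h2, hDgeY2]
  have T2 : ∀ x : ℝ, |x| ≤ r → |x| * Y * r ≤ 1 / ν * D := by
    intro x hx
    have e1 : |x| * (Y * r) ≤ r * (Y * r) :=
      mul_le_mul_of_nonneg_right hx (mul_nonneg hYpos.le hrpos.le)
    have h1 : ν * (|x| * Y * r) ≤ ν * r ^ 2 * Y := by nlinarith [e1]
    have h2 : ν * r ^ 2 * Y ≤ Y ^ 2 := by nlinarith [mul_le_mul_of_nonneg_right hYlb hYpos.le]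
    rw [div_mul_eq_mul_div, le_div_iff₀ hν]
    nlinarith [h1, h2, hDgeY2]
  have hCsum : 1 / ν ^ 2 * D + 1 / ν * D ≤ C * D := by
    have he : C * D - (1 / ν ^ 2 * D + 1 / ν * D) = 1 / ν ^ 2 * D := by rw [hC]; ring
    have h0 : (0:ℝ) ≤ 1 / ν ^ 2 * D := by positivity
    linarith
  refine ⟨?_, ?_, ?_⟩
  · -- M1
    rw [M1mg, hr2, hr4, hDval]
    apply mg_div_bound C r D _ hrpos hDpos
    have habs : |b * c * r - a * c * Y| ≤ |b * c| * r + |a * c| * Y := by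
      calc |b * c * r - a * c * Y| ≤ |b * c * r| + |a * c * Y| := abs_sub _ _
        _ = |b * c| * r + |a * c| * Y := by
            rw [abs_mul (b * c) r, abs_mul (a * c) Y, abs_of_pos hrpos, abs_of_pos hYpos]
    have h1 := T1 (b * c) hbc
    have h2 := T2 (a * c) hac
    calc |b * c * r - a * c * Y| * r ≤ (|b * c| * r + |a * c| * Y) * r :=
          mul_le_mul_of_nonneg_right habs hrpos.le
      _ = |b * c| * r * r + |a * c| * Y * r := by ring
      _ ≤ 1 / ν ^ 2 * D + 1 / ν * D := add_le_add h1 h2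
      _ ≤ C * D := hCsum
  · -- M2
    rw [M2mg, hr2, hr4, hDval]
    apply mg_div_bound C r D _ hrpos hDpos
    have habs : |-a * c * r - b * c * Y| ≤ |a * c| * r + |b * c| * Y := by
      calc |-a * c * r - b * c * Y| ≤ |-a * c * r| + |b * c * Y| := abs_sub _ _
        _ = |a * c| * r + |b * c| * Y := by
            rw [abs_mul (-a * c) r, abs_mul (b * c) Y, abs_of_pos hrpos, abs_of_pos hYpos,
              neg_mul, abs_neg]
    have h1 := T1 (a * c) hac
    have h2 := T2 (b * c) hbc
    calc |-a * c * r - b * c * Y| * r ≤ (|a * c| * r + |b * c| * Y) * r :=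
          mul_le_mul_of_nonneg_right habs hrpos.le
      _ = |a * c| * r * r + |b * c| * Y * r := by ring
      _ ≤ 1 / ν ^ 2 * D + 1 / ν * D := add_le_add h1 h2
      _ ≤ C * D := hCsum
  · -- M3
    rw [M3mg, hr2, hr4, hDval]
    apply mg_div_bound C r D _ hrpos hDpos
    have hab : |a ^ 2 + b ^ 2| ≤ r := by
      rw [abs_of_nonneg (by positivity)]
      nlinarith [sq_nonneg c]
    have habs : |(a ^ 2 + b ^ 2) * Y| = |a ^ 2 + b ^ 2| * Y := by
      rw [abs_mul (a ^ 2 + b ^ 2) Y, abs_of_pos hYpos]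
    have h2 := T2 (a ^ 2 + b ^ 2) hab
    calc |(a ^ 2 + b ^ 2) * Y| * r = |a ^ 2 + b ^ 2| * Y * r := by
          rw [habs]
      _ ≤ 1 / ν * D := h2
      _ ≤ C * D := by
          have he : C * D - 1 / ν * D = 2 / ν ^ 2 * D := by rw [hC]; ring
          have h0 : (0:ℝ) ≤ 2 / ν ^ 2 * D := by positivity
          linarith
end

section
/- For every s ≥ 1 there exists a constant C > 0 depending only on s (one may take C = 4) such that for every τ ≥ 0, every d ≥ 1, and all nonzero j, k, l ∈ ℤ^d with j + k = l, |e^{τ|l|^{1/s}} − e^{τ|k|^{1/s}}| ≤ C τ |j| (|k|^{1−1/s} + |l|^{1−1/s})^{−1} e^{τ|j|^{1/s}} e^{τ|k|^{1/s}}. -/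
/-!
With `a = |k|`, `b = |l|`, `c = |j|` and `θ = 1/s` the triangle inequality gives `|b - a| ≤ c`.
The mean value bound for `exp` controls the difference by `e^{τ max(a^θ, b^θ)} τ |b^θ - a^θ|`.
Subadditivity of `t ↦ t^θ` gives `max(a^θ, b^θ) ≤ c^θ + a^θ`, and comparing the cross terms
`b^θ a^{1-θ}`, `a^θ b^{1-θ}` with `a` and `b` gives `|b^θ - a^θ| (a^{1-θ} + b^{1-θ}) ≤ 2 |b - a|`;
so the bound even holds with constant `2`.
-/

noncomputable def znorm {d : ℕ} (k : Fin d → ℤ) : ℝ :=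
  Real.sqrt (∑ i, ((k i : ℝ)) ^ 2)

namespace Real

theorem exp_sub_exp_le_exp_mul_sub (x y : ℝ) :
    exp y - exp x ≤ exp y * (y - x) :=
  calc exp y - exp x = exp y * (1 - exp (-(y - x))) := by
        rw [mul_sub, ← exp_add]; ring_nf
    _ ≤ exp y * (y - x) :=
        mul_le_mul_of_nonneg_left (by linarith [one_sub_le_exp_neg (y - x)]) (exp_pos y).le

theorem abs_exp_sub_exp_le_exp_max_mul (x y : ℝ) :
    |exp x - exp y| ≤ exp (max x y) * |x - y| := by
  wlog hxy : y ≤ x generalizing x y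
  · rw [abs_sub_comm, max_comm, abs_sub_comm x]
    exact this y x (le_of_not_ge hxy)
  rw [max_eq_left hxy, abs_of_nonneg (sub_nonneg.2 (exp_le_exp.2 hxy)),
    abs_of_nonneg (sub_nonneg.2 hxy)]
  exact exp_sub_exp_le_exp_mul_sub y x

theorem rpow_sub_rpow_mul_add_rpow_le {a b θ : ℝ} (ha : 0 < a) (hab : a ≤ b) (hθ1 : θ ≤ 1) :
    (b ^ θ - a ^ θ) * (a ^ (1 - θ) + b ^ (1 - θ)) ≤ 2 * (b - a) := by
  have hb : 0 < b := ha.trans_le hab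
  have hmono : a ^ (1 - θ) ≤ b ^ (1 - θ) := rpow_le_rpow ha.le hab (by linarith)
  have hsplit : ∀ x : ℝ, 0 < x → x ^ θ * x ^ (1 - θ) = x := fun x hx => by
    rw [← rpow_add hx]; norm_num
  have hcross_b : b ^ θ * a ^ (1 - θ) ≤ b := by
    calc b ^ θ * a ^ (1 - θ) ≤ b ^ θ * b ^ (1 - θ) := by gcongr
      _ = b := hsplit b hb
  have hcross_a : a ≤ a ^ θ * b ^ (1 - θ) := by
    calc a = a ^ θ * a ^ (1 - θ) := (hsplit a ha).symm
      _ ≤ a ^ θ * b ^ (1 - θ) := by gcongr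
  nlinarith [hsplit a ha, hsplit b hb]

theorem abs_rpow_sub_rpow_le {a b θ : ℝ} (ha : 0 < a) (hb : 0 < b)
    (hθ0 : 0 ≤ θ) (hθ1 : θ ≤ 1) :
    |b ^ θ - a ^ θ| ≤ 2 * |b - a| / (a ^ (1 - θ) + b ^ (1 - θ)) := by
  wlog hab : a ≤ b generalizing a b
  · rw [abs_sub_comm, abs_sub_comm b, add_comm]
    exact this hb ha (le_of_not_ge hab)
  rw [le_div_iff₀ (by positivity), abs_of_nonneg (sub_nonneg.2 hab),
    abs_of_nonneg (sub_nonneg.2 (rpow_le_rpow ha.le hab hθ0))]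
  exact rpow_sub_rpow_mul_add_rpow_le ha hab hθ1

theorem abs_exp_mul_rpow_sub_exp_mul_rpow_le {θ τ a b c : ℝ} (hθ0 : 0 ≤ θ) (hθ1 : θ ≤ 1)
    (hτ : 0 ≤ τ) (ha : 0 < a) (hb : 0 < b) (hc : |b - a| ≤ c) :
    |exp (τ * b ^ θ) - exp (τ * a ^ θ)| ≤
      2 * τ * c * (a ^ (1 - θ) + b ^ (1 - θ))⁻¹ * exp (τ * c ^ θ) * exp (τ * a ^ θ) := by
  have hc0 : 0 ≤ c := (abs_nonneg _).trans hc
  have hsubadd : b ^ θ ≤ c ^ θ + a ^ θ :=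
    calc b ^ θ ≤ (c + a) ^ θ := rpow_le_rpow hb.le (by linarith [le_abs_self (b - a)]) hθ0
      _ ≤ c ^ θ + a ^ θ := rpow_add_le_add_rpow hc0 ha.le hθ0 hθ1
  have hmax : max (τ * b ^ θ) (τ * a ^ θ) ≤ τ * c ^ θ + τ * a ^ θ :=
    max_le (by nlinarith) (le_add_of_nonneg_left (by positivity))
  have hdiff : |τ * b ^ θ - τ * a ^ θ| ≤ τ * (2 * c / (a ^ (1 - θ) + b ^ (1 - θ))) := by
    rw [← mul_sub, abs_mul, abs_of_nonneg hτ]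
    gcongr
    exact (abs_rpow_sub_rpow_le ha hb hθ0 hθ1).trans (by gcongr)
  calc |exp (τ * b ^ θ) - exp (τ * a ^ θ)|
      ≤ exp (max (τ * b ^ θ) (τ * a ^ θ)) * |τ * b ^ θ - τ * a ^ θ| :=
        abs_exp_sub_exp_le_exp_max_mul _ _
    _ ≤ exp (τ * c ^ θ + τ * a ^ θ) * (τ * (2 * c / (a ^ (1 - θ) + b ^ (1 - θ)))) := by
        gcongr
    _ = 2 * τ * c * (a ^ (1 - θ) + b ^ (1 - θ))⁻¹ * exp (τ * c ^ θ) * exp (τ * a ^ θ) := by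
        rw [exp_add]; ring

end Real

theorem znorm_eq_norm {d : ℕ} (k : Fin d → ℤ) :
    znorm k = ‖WithLp.toLp 2 (fun i => (k i : ℝ))‖ := by
  simp [znorm, EuclideanSpace.norm_eq]

theorem znorm_pos {d : ℕ} {k : Fin d → ℤ} (hk : k ≠ 0) : 0 < znorm k := by
  rw [znorm_eq_norm, norm_pos_iff]
  intro h
  apply hk
  ext i
  simpa using congrFun (congrArg WithLp.ofLp h) i

theorem abs_znorm_sub_znorm_le {d : ℕ} {j k l : Fin d → ℤ} (hjkl : j + k = l) :
    |znorm l - znorm k| ≤ znorm j := by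
  have hsub : WithLp.toLp 2 (fun i => (l i : ℝ)) - WithLp.toLp 2 (fun i => (k i : ℝ)) =
      WithLp.toLp 2 (fun i => (j i : ℝ)) := by
    ext i
    simp [← hjkl]
  rw [znorm_eq_norm, znorm_eq_norm, znorm_eq_norm, ← hsub]
  exact abs_norm_sub_norm_le _ _

/-- For every `s ≥ 1` there exists a constant `C > 0` depending only on `s`
(one may take `C = 4`) such that for every `τ ≥ 0`, every `d ≥ 1`, and all
nonzero `j, k, l ∈ ℤ^d` with `j + k = l`,
`|e^{τ|l|^{1/s}} − e^{τ|k|^{1/s}}| ≤ C τ |j| (|k|^{1−1/s} + |l|^{1−1/s})⁻¹ e^{τ|j|^{1/s}} e^{τ|k|^{1/s}}`. -/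
theorem gevrey_weight_difference_bound (s : ℝ) (hs : 1 ≤ s) :
    ∃ C : ℝ, C = 4 ∧ 0 < C ∧
      ∀ τ : ℝ, 0 ≤ τ → ∀ d : ℕ, 1 ≤ d →
        ∀ j k l : Fin d → ℤ, j ≠ 0 → k ≠ 0 → l ≠ 0 → j + k = l →
          |Real.exp (τ * znorm l ^ (1 / s)) - Real.exp (τ * znorm k ^ (1 / s))| ≤
            C * τ * znorm j * (znorm k ^ (1 - 1 / s) + znorm l ^ (1 - 1 / s))⁻¹ *
              Real.exp (τ * znorm j ^ (1 / s)) * Real.exp (τ * znorm k ^ (1 / s)) := by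
  refine ⟨4, rfl, by norm_num, fun τ hτ d _ j k l _ hk hl hjkl => ?_⟩
  have hθ0 : 0 ≤ 1 / s := by positivity
  have hθ1 : 1 / s ≤ 1 := div_le_one_of_le₀ hs (by positivity)
  refine (Real.abs_exp_mul_rpow_sub_exp_mul_rpow_le hθ0 hθ1 hτ (znorm_pos hk) (znorm_pos hl)
    (abs_znorm_sub_znorm_le hjkl)).trans ?_
  have hj : 0 ≤ znorm j := Real.sqrt_nonneg _
  have hD : 0 ≤ znorm k ^ (1 - 1 / s) + znorm l ^ (1 - 1 / s) :=
    add_nonneg (Real.rpow_nonneg (znorm_pos hk).le _) (Real.rpow_nonneg (znorm_pos hl).le _)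
  gcongr
  norm_num
end
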